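/- For any two binary words u, v of equal length m, there exists a transformation of u into v of length equal to the swap-mismatch distance dist~(u,v) such that each position of the word is modified at most once. -/
import Mathlib


/-- Edit operations on binary words: `R i` flips the bit at position `i`,
`S i` swaps the (distinct) bits at positions `i` and `i+1`. Positions are 0-based. -/
inductive TOp where
  | R (i : ℕ)
  | S (i : ℕ)
deriving DecidableEq

namespace TOp

def apply : TOp → List Bool → List Bool
  | R i, w => w.set i (!(w.getD i false))
  | S i, w => (w.set i (w.getD (i+1) false)).set (i+1) (w.getD i false)

def valid : TOp → List Bool → Prop
  | R i, w => i < w.length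
  | S i, w => i + 1 < w.length ∧ w.getD i false ≠ w.getD (i+1) false

/-- The set of positions modified by an operation. -/
def positions : TOp → Finset ℕ
  | R i => {i}
  | S i => {i, i+1}

/-- The (leftmost) position of an operation. -/
def pos : TOp → ℕ
  | R i => i
  | S i => i

def isR : TOp → Prop
  | R _ => True
  | S _ => False

def isS : TOp → Prop
  | R _ => False
  | S _ => True

end TOp

/-- All operations of a sequence are valid when applied successively starting from `w`. -/
def validSeq : List TOp → List Bool → Prop
  | [], _ => True
  | o :: os, w => o.valid w ∧ validSeq os (o.apply w)

def applySeq : List TOp → List Bool → List Bool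
  | [], w => w
  | o :: os, w => applySeq os (o.apply w)

/-- `ops` is a tilde-transformation from `u` to `v`. -/
def Transforms (ops : List TOp) (u v : List Bool) : Prop :=
  validSeq ops u ∧ applySeq ops u = v

/-- The swap-mismatch (tilde) distance between two words. -/
noncomputable def tdist (u v : List Bool) : ℕ :=
  sInf { n | ∃ ops : List TOp, ops.length = n ∧ Transforms ops u v }

/-- Each position of the word is modified at most once along the sequence. -/
def eachPosOnce (ops : List TOp) : Prop :=
  ops.Pairwise fun o o' => Disjoint o.positions o'.positions

/-- A minimal tilde-transformation: length `tdist u v`, each position changed at most once. -/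
def MinimalTransf (ops : List TOp) (u v : List Bool) : Prop :=
  Transforms ops u v ∧ ops.length = tdist u v ∧ eachPosOnce ops

/-- The list of all words `w_0 = u, w_1, …, w_h` visited by the transformation. -/
def trajectory (ops : List TOp) (u : List Bool) : List (List Bool) :=
  List.scanl (fun w o => o.apply w) u ops

/-- `w` avoids `f` as a factor. -/
def FFree (f w : List Bool) : Prop := ¬ f <:+: w

/-- All words along the transformation are `f`-free. -/
def FreeTransf (f : List Bool) (ops : List TOp) (u : List Bool) : Prop :=
  ∀ w ∈ trajectory ops u, FFree f w

/-- `f` is tilde-isometric. -/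
def TildeIsometric (f : List Bool) : Prop :=
  ∀ u v : List Bool, u.length = v.length → f.length < u.length →
    FFree f u → FFree f v →
      ∃ ops : List TOp, MinimalTransf ops u v ∧ FreeTransf f ops u

/-- `(u,v)` is a pair of tilde-witnesses for `f`. -/
def Witnesses (f u v : List Bool) : Prop :=
  u.length = v.length ∧ FFree f u ∧ FFree f v ∧ 2 ≤ tdist u v ∧
    ∀ ops : List TOp, MinimalTransf ops u v → ¬ FreeTransf f ops u

/-- Hamming distance between equal-length words (number of mismatch positions). -/
def hdist (u v : List Bool) : ℕ := ((u.zip v).filter fun p => p.1 != p.2).length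


def D : List Bool → List Bool → ℕ
  | a::c::u, b::d::t =>
      if a = b then D (c::u) (d::t)
      else if c = b ∧ d = a then 1 + D u t
      else 1 + D (c::u) (d::t)
  | [a], [b] => if a = b then 0 else 1
  | _, _ => 0

lemma D_nil_right (u : List Bool) : D u [] = 0 := by
  cases u with
  | nil => simp [D]
  | cons a u => cases u <;> simp [D]

lemma D_self (w : List Bool) : D w w = 0 := by
  induction w with
  | nil => simp [D]
  | cons a u ih =>
    cases u with
    | nil => simp [D]
    | cons c u' => simpa [D] using ih

lemma D_cons_same (x : Bool) (u t : List Bool) : D (x::u) (x::t) = D u t := by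
  cases u with
  | nil => cases t <;> simp [D]
  | cons c u' =>
    cases t with
    | nil => simp [D, D_nil_right]
    | cons d t' => simp [D]

lemma bool_ne {a b : Bool} (h : ¬ a = b) : b = !a := by
  cases a <;> cases b <;> simp_all

lemma D_cons_le_aux : ∀ n (u : List Bool), u.length ≤ n → ∀ t a b, D (a::u) (b::t) ≤ 1 + D u t := by
  intro n
  induction n with
  | zero =>
    intro u hu t a b
    have : u = [] := by cases u <;> simp_all
    subst this
    cases t with
    | nil => by_cases h : a = b <;> simp [D, h]
    | cons d t' => simp [D]
  | succ n ih =>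
    intro u hu t a b
    cases u with
    | nil =>
      cases t with
      | nil => by_cases h : a = b <;> simp [D, h]
      | cons d t' => simp [D]
    | cons c u' =>
      cases t with
      | nil => simp [D]
      | cons d t' =>
        by_cases hab : a = b
        · simp [D, hab]
        · by_cases hsw : c = b ∧ d = a
          · have hcd : (b : Bool) ≠ a := fun h => hab h.symm
            have key : D u' t' ≤ D (b::u') (a::t') := by
              cases u' with
              | nil => simp [D]
              | cons e u'' =>
                cases t' with
                | nil => simp [D, D_nil_right]
                | cons f t'' =>
                  by_cases hsw2 : e = a ∧ f = b
                  · have := ih u'' (by simp at hu; omega) t'' e f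
                    simp [D, hcd, hsw2] at this ⊢
                    omega
                  · simp [D, hcd, hsw2]
            simp [D, hab, hsw]
            omega
          · simp [D, hab, hsw]

lemma D_cons_le (u t : List Bool) (a b : Bool) : D (a::u) (b::t) ≤ 1 + D u t :=
  D_cons_le_aux u.length u le_rfl t a b

lemma D_tail_le (u t : List Bool) (c d : Bool) (hcd : c ≠ d) : D u t ≤ D (c::u) (d::t) := by
  cases u with
  | nil => simp [D]
  | cons e u' =>
    cases t with
    | nil => simp [D, D_nil_right]
    | cons f t' =>
      by_cases hsw : e = d ∧ f = c
      · have := D_cons_le u' t' e f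
        simp [D, hcd, hsw] at this ⊢
        omega
      · simp [D, hcd, hsw]

lemma D_le_cons (u t : List Bool) (a b : Bool) : D u t ≤ 1 + D (a::u) (b::t) := by
  cases u with
  | nil => simp [D]
  | cons c u' =>
    cases t with
    | nil => simp [D_nil_right]
    | cons d t' =>
      by_cases hab : a = b
      · simp [D, hab]
      · by_cases hsw : c = b ∧ d = a
        · have := D_cons_le u' t' b a
          simp [D, hab, hsw] at this ⊢
          omega
        · simp [D, hab, hsw]; omega

lemma LR_zero (u t : List Bool) (a b : Bool) : D (a::u) (b::t) ≤ 1 + D ((!a)::u) (b::t) := by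
  by_cases hab : a = b
  · subst hab
    cases u with
    | nil => cases t <;> simp [D]
    | cons c u' =>
      cases t with
      | nil => simp [D]
      | cons d t' =>
        by_cases hsw : c = a ∧ d = !a
        · have := D_cons_le u' t' c d
          simp [D, hsw] at this ⊢
          omega
        · simp [D, hsw]
          omega
  · have hb : b = !a := bool_ne hab
    subst hb
    rw [D_cons_same]
    cases u with
    | nil => cases t <;> simp [D, hab]
    | cons c u' =>
      cases t with
      | nil => simp [D, D_nil_right]
      | cons d t' =>
        by_cases hsw : c = !a ∧ d = a
        · have hcd : c ≠ d := by rcases hsw with ⟨h1,h2⟩; subst h1; subst h2; simp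
          have := D_tail_le u' t' c d hcd
          simp [D, hab, hsw] at this ⊢
          omega
        · simp [D, hab, hsw]

lemma LR_aux : ∀ n (w : List Bool), w.length ≤ n → ∀ (v : List Bool) (i : ℕ),
    D w v ≤ 1 + D (w.set i (!(w.getD i false))) v := by
  intro n
  induction n with
  | zero =>
    intro w hw v i
    have : w = [] := by cases w <;> simp_all
    subst this
    simp [D]
  | succ n ih =>
    intro w hw v i
    cases w with
    | nil => simp [D]
    | cons a u =>
      cases v with
      | nil => simp [D_nil_right]
      | cons b t =>
        cases i with
        | zero => simpa using LR_zero u t a b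
        | succ j =>
          simp only [List.set_cons_succ, List.getD_cons_succ]
          by_cases hab : a = b
          · subst hab
            rw [D_cons_same, D_cons_same]
            exact ih u (by simp at hw ⊢; omega) t j
          · cases u with
            | nil => simp [D, hab]
            | cons c u₀ =>
              cases t with
              | nil => simp [D]
              | cons d t₀ =>
                cases j with
                | zero =>
                  simp only [List.set_cons_zero, List.getD_cons_zero]
                  by_cases hsw : c = b ∧ d = a
                  · obtain ⟨h1, h2⟩ := hsw
                    have ha : (!b) = a := by cases a <;> cases b <;> simp_all
                    have hL : D (a::c::u₀) (b::d::t₀) = 1 + D u₀ t₀ := by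
                      simp [D, hab, h1, h2]
                    have hR : D (a::(!c)::u₀) (b::d::t₀) = 1 + D u₀ t₀ := by
                      rw [h1, h2, ← ha]
                      simp [D, D_cons_same]
                    rw [hL, hR]
                    omega
                  · by_cases hsw2 : (!c) = b ∧ d = a
                    · obtain ⟨g1, g2⟩ := hsw2
                      have hcb : ¬ c = b := fun h => hsw ⟨h, g2⟩
                      have hL : D (a::c::u₀) (b::d::t₀) = 1 + D (c::u₀) (d::t₀) := by
                        simp [D, hab, hcb, g2, hsw]
                      have hR : D (a::(!c)::u₀) (b::d::t₀) = 1 + D u₀ t₀ := by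
                        simp [D, hab, g1, g2]
                      have := D_cons_le u₀ t₀ c d
                      omega
                    · have hL : D (a::c::u₀) (b::d::t₀) = 1 + D (c::u₀) (d::t₀) := by
                        simp only [D, if_neg hab, if_neg hsw]
                      have hR : D (a::(!c)::u₀) (b::d::t₀) = 1 + D ((!c)::u₀) (d::t₀) := by
                        simp only [D, if_neg hab, if_neg hsw2]
                      have := LR_zero u₀ t₀ c d
                      omega
                | succ j' =>
                  simp only [List.set_cons_succ, List.getD_cons_succ]
                  by_cases hsw : c = b ∧ d = a
                  · obtain ⟨h1, h2⟩ := hsw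
                    have hL : D (a::c::u₀) (b::d::t₀) = 1 + D u₀ t₀ := by
                      simp [D, hab, h1, h2]
                    have hR : D (a::c::(u₀.set j' (!(u₀.getD j' false)))) (b::d::t₀)
                        = 1 + D (u₀.set j' (!(u₀.getD j' false))) t₀ := by
                      simp [D, hab, h1, h2]
                    have := ih u₀ (by simp at hw ⊢; omega) t₀ j'
                    omega
                  · have hL : D (a::c::u₀) (b::d::t₀) = 1 + D (c::u₀) (d::t₀) := by
                      simp only [D, if_neg hab, if_neg hsw]
                    have hR : D (a::c::(u₀.set j' (!(u₀.getD j' false)))) (b::d::t₀)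
                        = 1 + D (c::(u₀.set j' (!(u₀.getD j' false)))) (d::t₀) := by
                      simp only [D, if_neg hab, if_neg hsw]
                    have := ih (c::u₀) (by simp at hw ⊢; omega) (d::t₀) (j'+1)
                    simp only [List.set_cons_succ, List.getD_cons_succ] at this
                    omega

lemma LR (w v : List Bool) (i : ℕ) :
    D w v ≤ 1 + D (w.set i (!(w.getD i false))) v :=
  LR_aux w.length w le_rfl v i

lemma LR0' (u v : List Bool) (a : Bool) : D (a::u) v ≤ 1 + D ((!a)::u) v := by
  simpa using LR (a::u) v 0

lemma bne3 : ∀ {a b c : Bool}, a ≠ b → a ≠ c → b = c := by decide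

lemma LS_aux : ∀ n (w : List Bool), w.length ≤ n → ∀ (v : List Bool) (i : ℕ),
    i + 1 < w.length → w.getD i false ≠ w.getD (i+1) false →
    D w v ≤ 1 + D ((w.set i (w.getD (i+1) false)).set (i+1) (w.getD i false)) v := by
  intro n
  induction n with
  | zero =>
    intro w hw v i hi hne
    omega
  | succ n ih =>
    intro w hw v i hi hne
    cases w with
    | nil => simp at hi
    | cons a u =>
      cases v with
      | nil => simp [D_nil_right]
      | cons b t =>
        cases i with
        | zero =>
          cases u with
          | nil => simp at hi
          | cons c u₀ =>
            simp only [List.getD_cons_zero, List.getD_cons_succ] at hne ⊢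
            have hset : (((a::c::u₀).set 0 c).set (0+1) a) = c::a::u₀ := by simp
            rw [hset]
            cases t with
            | nil => simp [D]
            | cons d t₀ =>
              have hca2 : ¬ (c = a) := fun h => hne h.symm
              by_cases hab : a = b
              · subst hab
                by_cases hd : d = c
                · have hL : D (a::c::u₀) (a::d::t₀) = D u₀ t₀ := by
                    rw [D_cons_same, hd, D_cons_same]
                  have hR : D (c::a::u₀) (a::d::t₀) = 1 + D u₀ t₀ := by
                    simp [D, hca2, hd]
                  omega
                · have hd' : d = a := bne3 (fun h => hd h.symm) (fun h => hne h.symm)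
                  have hL : D (a::c::u₀) (a::d::t₀) ≤ 1 + D u₀ t₀ := by
                    rw [D_cons_same]; exact D_cons_le u₀ t₀ c d
                  have hR : D (c::a::u₀) (a::d::t₀) = 1 + D u₀ t₀ := by
                    rw [hd']
                    simp [D, hca2, hne, D_cons_same]
                  omega
              · have hcb : c = b := bne3 hne hab
                by_cases hd : d = a
                · have hL : D (a::c::u₀) (b::d::t₀) = 1 + D u₀ t₀ := by
                    simp [D, hab, hcb, hd]
                  have hR : D (c::a::u₀) (b::d::t₀) = D u₀ t₀ := by
                    rw [hcb, hd, D_cons_same, D_cons_same]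
                  omega
                · have hd' : d = b := bne3 (fun h => hd h.symm) hab
                  have hba : ¬ (b = a) := fun h => hab h.symm
                  have hL : D (a::c::u₀) (b::d::t₀) = 1 + D u₀ t₀ := by
                    rw [hcb, hd']
                    simp [D, hab, hba, D_cons_same]
                  have hR : D (c::a::u₀) (b::d::t₀) = D (a::u₀) (d::t₀) := by
                    rw [hcb, D_cons_same]
                  have h5 : D u₀ t₀ ≤ D (a::u₀) (d::t₀) :=
                    D_tail_le u₀ t₀ a d (by rw [hd']; exact hab)
                  omega
        | succ j =>
          cases u with
          | nil => simp at hi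
          | cons c u₀ =>
            simp only [List.getD_cons_succ] at hne ⊢
            simp only [List.set_cons_succ, List.getD_cons_succ]
            have hi' : j + 1 < (c::u₀).length := by simp at hi ⊢; omega
            by_cases hab : a = b
            · subst hab
              rw [D_cons_same, D_cons_same]
              exact ih (c::u₀) (by simp at hw ⊢; omega) t j hi' hne
            · cases t with
              | nil => simp [D]
              | cons d t₀ =>
                have hba : ¬ (b = a) := fun h => hab h.symm
                have hb : b = !a := bool_ne hab
                cases j with
                | zero =>
                  cases u₀ with
                  | nil => simp at hi'
                  | cons e u₁ =>
                    simp only [List.getD_cons_zero, List.getD_cons_succ] at hne ⊢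
                    have hset : ((c::e::u₁).set 0 e).set (0+1) c = e::c::u₁ := by simp
                    rw [hset]
                    by_cases hcb : c = b
                    · have hca : c ≠ a := fun h => hab (h.symm.trans hcb)
                      have hea : e = a := bne3 hne hca
                      by_cases hd : d = a
                      · have hL : D (a::c::e::u₁) (b::d::t₀) = 1 + D (a::u₁) t₀ := by
                          rw [hcb, hd, hea]
                          simp [D, hab, hba, D_cons_same]
                        have hR : D (a::e::c::u₁) (b::d::t₀) = 1 + D (c::u₁) t₀ := by
                          rw [hea, hd]
                          simp [D, hab, hba, D_cons_same]
                        have := LR0' u₁ t₀ a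
                        have hca' : c = !a := by rw [hcb, hb]
                        rw [← hca'] at this
                        omega
                      · have hd' : d = b := bne3 (fun h => hd h.symm) hab
                        have hL : D (a::c::e::u₁) (b::d::t₀) = 1 + D (a::u₁) t₀ := by
                          rw [hcb, hd', hea]
                          simp [D, hab, hba, D_cons_same]
                        have hR : D (a::e::c::u₁) (b::d::t₀) = 1 + D (a::c::u₁) (b::t₀) := by
                          rw [hea, hd']
                          have h2 : ¬ ((a:Bool) = b ∧ b = a) := fun h => hab h.1
                          simp only [D, if_neg hab, if_neg h2]
                        have key : D (a::u₁) t₀ ≤ 1 + D (a::c::u₁) (b::t₀) := by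
                          cases t₀ with
                          | nil => simp [D, D_nil_right]
                          | cons f t₁ =>
                            by_cases hf : f = a
                            · subst hf
                              have h4 : D (f::c::u₁) (b::f::t₁) = 1 + D u₁ t₁ := by
                                simp [D, hab, hcb]
                              rw [D_cons_same, h4]
                              omega
                            · have hf' : f = b := bne3 (fun h => hf h.symm) hab
                              have h3 : D (a::c::u₁) (b::f::t₁) = 1 + D (c::u₁) (f::t₁) := by
                                have h5 : ¬ (c = b ∧ f = a) := fun h => hf h.2
                                simp only [D, if_neg hab, if_neg h5]
                              have := LR0' u₁ (f::t₁) a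
                              have hca' : c = !a := by rw [hcb, hb]
                              rw [← hca'] at this
                              omega
                        omega
                    · have hca : c = a := bne3 (fun h => hcb h.symm) hba
                      have heb : e = b := bne3 hne hcb
                      have hL : D (a::c::e::u₁) (b::d::t₀) = 1 + D (a::e::u₁) (d::t₀) := by
                        have h1 : ¬ (c = b ∧ d = a) := fun h => hcb h.1
                        simp only [D, if_neg hab, if_neg h1]
                        rw [hca]
                      by_cases hd : d = a
                      · have hR : D (a::e::c::u₁) (b::d::t₀) = 1 + D (a::u₁) t₀ := by
                          rw [hca, heb, hd]
                          simp [D, hab, hba, D_cons_same]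
                        have hL2 : D (a::e::u₁) (d::t₀) = D (b::u₁) t₀ := by
                          rw [hd, heb, D_cons_same]
                        have := LR0' u₁ t₀ b
                        have hab' : a = !b := bool_ne hba
                        rw [← hab'] at this
                        omega
                      · have hd' : d = b := bne3 (fun h => hd h.symm) hab
                        have hR : D (a::e::c::u₁) (b::d::t₀) = 1 + D (a::u₁) t₀ := by
                          rw [hca, heb, hd']
                          have h2 : ¬ ((b:Bool) = b ∧ b = a) := fun h => hba h.2
                          simp only [D, if_neg hab, if_neg h2]
                          rw [D_cons_same]
                          simp [hba]
                        have key : D (a::e::u₁) (d::t₀) ≤ 1 + D (a::u₁) t₀ := by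
                          rw [heb, hd']
                          cases t₀ with
                          | nil => simp [D]
                          | cons f t₁ =>
                            by_cases hf : f = a
                            · subst hf
                              have h4 : D (f::b::u₁) (b::f::t₁) = 1 + D u₁ t₁ := by
                                simp [D, hab]
                              rw [h4, D_cons_same]
                            · have hf' : f = b := bne3 (fun h => hf h.symm) hab
                              have h3 : D (a::b::u₁) (b::f::t₁) = 1 + D (b::u₁) (f::t₁) := by
                                have h5 : ¬ ((b:Bool) = b ∧ f = a) := fun h => hf h.2
                                simp only [D, if_neg hab, if_neg h5]
                                simp [hf]
                              rw [h3, hf', D_cons_same]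
                              have h6 := D_tail_le u₁ t₁ a b hab
                              omega
                        omega
                | succ j'' =>
                  simp only [List.set_cons_succ, List.getD_cons_succ] at *
                  by_cases hsw : c = b ∧ d = a
                  · obtain ⟨h1, h2⟩ := hsw
                    have hL : D (a::c::u₀) (b::d::t₀) = 1 + D u₀ t₀ := by
                      simp [D, hab, h1, h2]
                    have hR : D (a::c::((u₀.set j'' (u₀.getD (j''+1) false)).set (j''+1) (u₀.getD j'' false))) (b::d::t₀)
                        = 1 + D ((u₀.set j'' (u₀.getD (j''+1) false)).set (j''+1) (u₀.getD j'' false)) t₀ := by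
                      simp [D, hab, h1, h2]
                    have := ih u₀ (by simp at hw ⊢; omega) t₀ j'' (by simp at hi ⊢; omega) hne
                    omega
                  · have hL : D (a::c::u₀) (b::d::t₀) = 1 + D (c::u₀) (d::t₀) := by
                      simp only [D, if_neg hab, if_neg hsw]
                    have hR : D (a::c::((u₀.set j'' (u₀.getD (j''+1) false)).set (j''+1) (u₀.getD j'' false))) (b::d::t₀)
                        = 1 + D (c::((u₀.set j'' (u₀.getD (j''+1) false)).set (j''+1) (u₀.getD j'' false))) (d::t₀) := by
                      simp only [D, if_neg hab, if_neg hsw]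
                    have := ih (c::u₀) (by simp at hw ⊢; omega) (d::t₀) (j''+1) (by simp at hi ⊢; omega) hne
                    simp only [List.set_cons_succ, List.getD_cons_succ] at this
                    omega



lemma D_step (o : TOp) (w v : List Bool) (h : o.valid w) :
    D w v ≤ 1 + D (o.apply w) v := by
  cases o with
  | R i => exact LR w v i
  | S i => exact LS_aux w.length w le_rfl v i h.1 h.2

lemma D_le_trans (v : List Bool) : ∀ ops (w : List Bool), validSeq ops w →
    D w v ≤ ops.length + D (applySeq ops w) v := by
  intro ops
  induction ops with
  | nil => intro w _; simp [applySeq]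
  | cons o os ih =>
    intro w hv
    obtain ⟨h1, h2⟩ := hv
    have := D_step o w v h1
    have := ih (o.apply w) h2
    simp only [applySeq, List.length_cons]
    omega

lemma D_lower (u v : List Bool) (ops : List TOp) (h : Transforms ops u v) :
    D u v ≤ ops.length := by
  have := D_le_trans v ops u h.1
  rw [h.2, D_self] at this
  simpa using this

def shift : TOp → TOp
  | .R i => .R (i+1)
  | .S i => .S (i+1)

def G : List Bool → List Bool → List TOp
  | a::c::u, b::d::t =>
      if a = b then (G (c::u) (d::t)).map shift
      else if c = b ∧ d = a then TOp.S 0 :: ((G u t).map shift).map shift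
      else TOp.R 0 :: (G (c::u) (d::t)).map shift
  | [a], [b] => if a = b then [] else [TOp.R 0]
  | _, _ => []

lemma G_D_default (u t : List Bool)
    (h1 : ∀ (a c : Bool) (u' : List Bool) (b d : Bool) (t' : List Bool),
      u = a :: c :: u' → t = b :: d :: t' → False)
    (h2 : ∀ (a b : Bool), u = [a] → t = [b] → False) :
    G u t = [] ∧ D u t = 0 := by
  cases u with
  | nil => cases t <;> simp [G, D]
  | cons a u' =>
    cases u' with
    | nil =>
      cases t with
      | nil => simp [G, D]
      | cons b t' =>
        cases t' with
        | nil => exact absurd rfl (fun h => h2 a b rfl h)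
        | cons d t'' => simp [G, D]
    | cons c u'' =>
      cases t with
      | nil => simp [G, D]
      | cons b t' =>
        cases t' with
        | nil => simp [G, D]
        | cons d t'' => exact absurd rfl (fun h => h1 a c u'' b d t'' rfl h)

lemma G_length : ∀ u t : List Bool, (G u t).length = D u t := by
  intro u t
  induction u, t using G.induct with
  | case1 c u b d t ih => simp [G, D, ih]
  | case2 a c u b d t hab hsw ih => simp [G, D, hab, hsw, ih]; omega
  | case3 a c u b d t hab hsw ih => simp [G, D, hab, hsw, ih]; omega
  | case4 b => simp [G, D]
  | case5 a b hab => simp [G, D, hab]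
  | case6 t x h1 h2 =>
    obtain ⟨hG, hD⟩ := G_D_default t x h1 h2
    simp [hG, hD]

lemma apply_shift (o : TOp) (a : Bool) (w : List Bool) :
    (shift o).apply (a::w) = a :: o.apply w := by
  cases o <;> simp [TOp.apply, shift]

lemma valid_shift (o : TOp) (a : Bool) (w : List Bool) :
    (shift o).valid (a::w) ↔ o.valid w := by
  cases o <;> simp [TOp.valid, shift] <;> omega

lemma validSeq_map_shift (ops : List TOp) : ∀ (a : Bool) (w : List Bool),
    validSeq (ops.map shift) (a::w) ↔ validSeq ops w := by
  induction ops with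
  | nil => intro a w; simp [validSeq]
  | cons o os ih =>
    intro a w
    simp only [List.map_cons, validSeq, valid_shift, apply_shift, ih]

lemma applySeq_map_shift (ops : List TOp) : ∀ (a : Bool) (w : List Bool),
    applySeq (ops.map shift) (a::w) = a :: applySeq ops w := by
  induction ops with
  | nil => intro a w; simp [applySeq]
  | cons o os ih =>
    intro a w
    simp only [List.map_cons, applySeq, apply_shift, ih]

lemma G_spec : ∀ u t : List Bool, u.length = t.length → Transforms (G u t) u t := by
  intro u t
  induction u, t using G.induct with
  | case1 c u b d t ih =>
    intro hl
    have hl' : (c::u).length = (d::t).length := by simp at hl ⊢; omega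
    obtain ⟨h1, h2⟩ := ih hl'
    constructor
    · simp only [G, if_true, if_pos trivial]
      rw [validSeq_map_shift]
      exact h1
    · simp only [G, if_true, if_pos trivial]
      rw [applySeq_map_shift, h2]
  | case2 a c u b d t hab hsw ih =>
    intro hl
    have hl' : u.length = t.length := by simpa using hl
    obtain ⟨h1, h2⟩ := ih hl'
    obtain ⟨hc, hd⟩ := hsw
    have hac : a ≠ c := fun h => hab (h.trans hc)
    have hGeq : G (a::c::u) (b::d::t) = TOp.S 0 :: ((G u t).map shift).map shift := by
      simp only [G, if_neg hab, if_pos (⟨hc, hd⟩ : c = b ∧ d = a)]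
    have happ : (TOp.S 0).apply (a::c::u) = c::a::u := by simp [TOp.apply]
    rw [Transforms, hGeq]
    constructor
    · simp only [validSeq, happ]
      refine ⟨⟨by simp, by simpa [TOp.valid] using hac⟩, ?_⟩
      rw [validSeq_map_shift, validSeq_map_shift]
      exact h1
    · simp only [applySeq, happ, applySeq_map_shift, h2]
      rw [hc, hd]
  | case3 a c u b d t hab hsw ih =>
    intro hl
    have hl' : (c::u).length = (d::t).length := by simp at hl ⊢; omega
    obtain ⟨h1, h2⟩ := ih hl'
    have hb : b = !a := bool_ne hab
    have hGeq : G (a::c::u) (b::d::t) = TOp.R 0 :: (G (c::u) (d::t)).map shift := by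
      simp only [G, if_neg hab, if_neg hsw]
    have happ : (TOp.R 0).apply (a::c::u) = b::c::u := by simp [TOp.apply, hb]
    rw [Transforms, hGeq]
    constructor
    · simp only [validSeq, happ]
      refine ⟨by simp [TOp.valid], ?_⟩
      rw [validSeq_map_shift]
      exact h1
    · simp only [applySeq, happ, applySeq_map_shift, h2]
  | case4 b => intro _; exact ⟨by simp [G, validSeq], by simp [G, applySeq]⟩
  | case5 a b hab =>
    intro _
    have hb : b = !a := bool_ne hab
    refine ⟨?_, ?_⟩
    · simp [G, hab, validSeq, TOp.valid]
    · simp [G, hab, applySeq, TOp.apply, hb]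
  | case6 t x h1 h2 =>
    intro hl
    obtain ⟨hG, -⟩ := G_D_default t x h1 h2
    cases t with
    | nil =>
      cases x with
      | nil => exact ⟨by simp [hG, validSeq], by simp [hG, applySeq]⟩
      | cons b x' => simp at hl
    | cons a t' =>
      cases t' with
      | nil =>
        cases x with
        | nil => simp at hl
        | cons b x' =>
          cases x' with
          | nil => exact absurd rfl (fun h => h2 a b rfl h)
          | cons d x'' => simp at hl
      | cons c t'' =>
        cases x with
        | nil => simp at hl
        | cons b x' =>
          cases x' with
          | nil => simp at hl
          | cons d x'' => exact absurd rfl (fun h => h1 a c t'' b d x'' rfl h)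

lemma positions_shift (o : TOp) : (shift o).positions = o.positions.image (·+1) := by
  cases o <;> simp [TOp.positions, shift]

lemma one_le_mem_shift {j : ℕ} {o : TOp} (h : j ∈ (shift o).positions) : 1 ≤ j := by
  rw [positions_shift] at h
  simp at h
  omega

lemma two_le_mem_shift_shift {j : ℕ} {o : TOp} (h : j ∈ (shift (shift o)).positions) : 2 ≤ j := by
  rw [positions_shift, positions_shift] at h
  simp only [Finset.mem_image] at h
  obtain ⟨x, hx, rfl⟩ := h
  obtain ⟨y, hy, rfl⟩ := hx
  omega

lemma eachPosOnce_map_shift (ops : List TOp) :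
    eachPosOnce (ops.map shift) ↔ eachPosOnce ops := by
  unfold eachPosOnce
  rw [List.pairwise_map]
  refine List.Pairwise.iff ?_
  intro o o'
  rw [positions_shift, positions_shift]
  exact Finset.disjoint_image (fun x y h => by omega)

lemma G_eachPosOnce : ∀ u t : List Bool, eachPosOnce (G u t) := by
  intro u t
  induction u, t using G.induct with
  | case1 c u b d t ih =>
    simp only [G, if_true, if_pos trivial]
    exact (eachPosOnce_map_shift _).mpr ih
  | case2 a c u b d t hab hsw ih =>
    simp only [G, if_neg hab, if_pos hsw]
    refine List.Pairwise.cons ?_ ?_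
    · intro o' ho'
      simp only [List.mem_map] at ho'
      obtain ⟨o'', ⟨o₃, _, rfl⟩, rfl⟩ := ho'
      rw [Finset.disjoint_left]
      intro j hj hj'
      have := two_le_mem_shift_shift hj'
      simp [TOp.positions] at hj
      omega
    · exact (eachPosOnce_map_shift _).mpr ((eachPosOnce_map_shift _).mpr ih)
  | case3 a c u b d t hab hsw ih =>
    simp only [G, if_neg hab, if_neg hsw]
    refine List.Pairwise.cons ?_ ?_
    · intro o' ho'
      simp only [List.mem_map] at ho'
      obtain ⟨o'', _, rfl⟩ := ho'
      rw [Finset.disjoint_left]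
      intro j hj hj'
      have := one_le_mem_shift hj'
      simp [TOp.positions] at hj
      omega
    · exact (eachPosOnce_map_shift _).mpr ih
  | case4 b => simp [G, eachPosOnce]
  | case5 a b hab => simp [G, hab, eachPosOnce]
  | case6 t x h1 h2 =>
    obtain ⟨hG, -⟩ := G_D_default t x h1 h2
    simp [hG, eachPosOnce]


theorem stmt0 (u v : List Bool) (h : u.length = v.length) :
    ∃ ops : List TOp, MinimalTransf ops u v := by
  refine ⟨G u v, G_spec u v h, ?_, G_eachPosOnce u v⟩
  have hmem : (G u v).length ∈ {n | ∃ ops : List TOp, ops.length = n ∧ Transforms ops u v} :=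
    ⟨G u v, rfl, G_spec u v h⟩
  refine le_antisymm ?_ (Nat.sInf_le hmem)
  refine le_csInf ⟨_, hmem⟩ ?_
  rintro n ⟨ops, rfl, hops⟩
  calc (G u v).length = D u v := G_length u v
    _ ≤ ops.length := D_lower u v ops hops
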